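/- arXiv:2011.06484 — 3 statements merged into one kernel-verified Lean document; each statement's English description precedes it below -/
import Mathlib

section
/- Let M be an n×n complex Hermitian matrix, ḡ ∈ ℂ^n, c ∈ ℝ, and ε > 0. Then the following are equivalent: (i) for every δ ∈ ℂ^n with ‖δ‖_2 ≤ ε one has δ^H M δ + 2 Re(ḡ^H M δ) + ḡ^H M ḡ + c ≤ 0; (ii) there exists a real number q ≥ 0 such that the (n+1)×(n+1) Hermitian matrix P − G^H M G is positive semidefinite, where P is the block-diagonal matrix with top-left block q·I_n and bottom-right scalar entry −q ε² − c, and G = [I_n, ḡ] is the n×(n+1) matrix obtained by appending the column ḡ to the n×n identity matrix. -/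
open ComplexOrder Matrix

/-!
Write `z = (δ, t) ∈ ℂⁿ ⊕ ℂ` and consider the Hermitian forms `D z = ‖δ‖² - ε²|t|²` and
`A z = (δ + t ḡ)ᴴ M (δ + t ḡ) + c|t|²`. The LMI matrix is exactly `q D - A`, and the robust
constraint is the implication `D z ≤ 0 → A z ≤ 0`: at `t = 1` this is the constraint itself,
every `z` with `t ≠ 0` rescales to `t = 1`, and `t = 0` forces `z = 0`. Since `D (0, 1) < 0`, the
theorem is an instance of the complex S-lemma.

For the S-lemma, take `D x > 0 > D y`. After scaling `x` and `y`, and rotating `y` by a phase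
that makes the cross term `Re (xᴴ D y)` vanish, both `x + y` and `x - y` are `D`-nonpositive.
Adding `A (x + y) ≤ 0` and `A (x - y) ≤ 0` cancels the cross term of `A`, which gives
`A x / D x ≤ A y / D y`. Any `q` between the supremum of the left-hand ratios and the infimum of
the right-hand ones then satisfies `A ≤ q D`.
-/

namespace Complex

lemma exists_norm_eq_one_re_mul_eq_zero (β : ℂ) : ∃ u : ℂ, ‖u‖ = 1 ∧ (u * β).re = 0 := by
  refine ⟨I * exp (-(β.arg * I)), ?_, ?_⟩
  · rw [norm_mul, norm_I, ← neg_mul, ← ofReal_neg, norm_exp_ofReal_mul_I, one_mul]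
  · have hrot : I * exp (-(β.arg * I)) * β = I * ‖β‖ :=
      calc I * exp (-(β.arg * I)) * β = I * exp (-(β.arg * I)) * (‖β‖ * exp (β.arg * I)) := by
            rw [norm_mul_exp_arg_mul_I]
        _ = I * ‖β‖ * exp (-(β.arg * I) + β.arg * I) := by rw [exp_add]; ring
        _ = I * ‖β‖ := by rw [neg_add_cancel, exp_zero, mul_one]
    simp [hrot]

end Complex

namespace Matrix

variable {m k : Type*} [Fintype m] [Fintype k]

noncomputable def hermForm (A : Matrix m m ℂ) (x : m → ℂ) : ℝ := (star x ⬝ᵥ A *ᵥ x).re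

lemma hermForm_smul (A : Matrix m m ℂ) (s : ℂ) (x : m → ℂ) :
    hermForm A (s • x) = ‖s‖ ^ 2 * hermForm A x := by
  rw [hermForm, hermForm, star_smul, mulVec_smul, dotProduct_smul, smul_dotProduct, smul_eq_mul,
    smul_eq_mul, ← mul_assoc, Complex.star_def, Complex.mul_conj', ← Complex.ofReal_pow,
    Complex.re_ofReal_mul]

lemma IsHermitian.star_dotProduct_mulVec_comm {A : Matrix m m ℂ} (hA : A.IsHermitian)
    (x y : m → ℂ) : star y ⬝ᵥ A *ᵥ x = star (star x ⬝ᵥ A *ᵥ y) := by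
  rw [star_dotProduct, star_mulVec, ← dotProduct_mulVec, hA.eq]

lemma IsHermitian.hermForm_add {A : Matrix m m ℂ} (hA : A.IsHermitian) (x y : m → ℂ) :
    hermForm A (x + y) = hermForm A x + hermForm A y + 2 * (star x ⬝ᵥ A *ᵥ y).re := by
  have hyx := congrArg Complex.re (hA.star_dotProduct_mulVec_comm x y)
  rw [Complex.star_def, Complex.conj_re] at hyx
  simp only [hermForm, star_add, mulVec_add, dotProduct_add, add_dotProduct, Complex.add_re, hyx]
  ring

lemma IsHermitian.hermForm_sub {A : Matrix m m ℂ} (hA : A.IsHermitian) (x y : m → ℂ) :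
    hermForm A (x - y) = hermForm A x + hermForm A y - 2 * (star x ⬝ᵥ A *ᵥ y).re := by
  have hneg : hermForm A (-y) = hermForm A y := by
    simpa using hermForm_smul A (-1) y
  rw [sub_eq_add_neg, hA.hermForm_add, hneg, mulVec_neg, dotProduct_neg, Complex.neg_re]
  ring

lemma sub_hermForm (A B : Matrix m m ℂ) (x : m → ℂ) :
    hermForm (A - B) x = hermForm A x - hermForm B x := by
  simp [hermForm, sub_mulVec, dotProduct_sub]

lemma add_hermForm (A B : Matrix m m ℂ) (x : m → ℂ) :
    hermForm (A + B) x = hermForm A x + hermForm B x := by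
  simp [hermForm, add_mulVec, dotProduct_add]

lemma ofReal_smul_hermForm (r : ℝ) (A : Matrix m m ℂ) (x : m → ℂ) :
    hermForm ((r : ℂ) • A) x = r * hermForm A x := by
  rw [hermForm, hermForm, smul_mulVec, dotProduct_smul, smul_eq_mul, Complex.re_ofReal_mul]

lemma posSemidef_iff_hermForm_nonneg {N : Matrix m m ℂ} (hN : N.IsHermitian) :
    N.PosSemidef ↔ ∀ x, 0 ≤ hermForm N x := by
  rw [posSemidef_iff_dotProduct_mulVec, and_iff_right hN]
  refine forall_congr' fun x => ?_
  rw [Complex.nonneg_iff, hermForm]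
  exact and_iff_left (hN.im_star_dotProduct_mulVec_self x).symm

section SLemma

variable {A D : Matrix m m ℂ}

lemma neg_hermForm_mul_add_mul_nonpos (hA : A.IsHermitian) (hD : D.IsHermitian)
    (h : ∀ z, hermForm D z ≤ 0 → hermForm A z ≤ 0) {x y : m → ℂ}
    (hx : 0 < hermForm D x) (hy : hermForm D y < 0) :
    -hermForm D y * hermForm A x + hermForm D x * hermForm A y ≤ 0 := by
  obtain ⟨u, hu, hre⟩ := Complex.exists_norm_eq_one_re_mul_eq_zero (star x ⬝ᵥ D *ᵥ y)
  set a := √(-hermForm D y)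
  set b := √(hermForm D x)
  have hx' (B : Matrix m m ℂ) : hermForm B ((a : ℂ) • x) = -hermForm D y * hermForm B x := by
    rw [hermForm_smul, Complex.norm_real, Real.norm_eq_abs, sq_abs, Real.sq_sqrt (by linarith)]
  have hy' (B : Matrix m m ℂ) :
      hermForm B (((b : ℂ) * u) • y) = hermForm D x * hermForm B y := by
    rw [hermForm_smul, norm_mul, hu, mul_one, Complex.norm_real, Real.norm_eq_abs, sq_abs,
      Real.sq_sqrt hx.le]
  have hcross : (star ((a : ℂ) • x) ⬝ᵥ D *ᵥ (((b : ℂ) * u) • y)).re = 0 := by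
    rw [star_smul, mulVec_smul, dotProduct_smul, smul_dotProduct, smul_eq_mul, smul_eq_mul,
      Complex.star_def, Complex.conj_ofReal,
      show (b * u : ℂ) * (a * (star x ⬝ᵥ D *ᵥ y)) =
          ((a * b : ℝ) : ℂ) * (u * (star x ⬝ᵥ D *ᵥ y)) by push_cast; ring,
      Complex.re_ofReal_mul, hre, mul_zero]
  have hAadd := h ((a : ℂ) • x + ((b : ℂ) * u) • y)
    (by rw [hD.hermForm_add, hx', hy', hcross]; linarith)
  have hAsub := h ((a : ℂ) • x - ((b : ℂ) * u) • y)
    (by rw [hD.hermForm_sub, hx', hy', hcross]; linarith)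
  rw [hA.hermForm_add, hx', hy'] at hAadd
  rw [hA.hermForm_sub, hx', hy'] at hAsub
  linarith

theorem exists_nonneg_hermForm_le_smul (hA : A.IsHermitian) (hD : D.IsHermitian)
    (h : ∀ z, hermForm D z ≤ 0 → hermForm A z ≤ 0) {y₀ : m → ℂ} (hy₀ : hermForm D y₀ < 0) :
    ∃ q : ℝ, 0 ≤ q ∧ ∀ x, hermForm A x ≤ q * hermForm D x := by
  set T := (fun y => hermForm A y / hermForm D y) '' {y | hermForm D y < 0}
  have hT_nonneg : ∀ r ∈ T, 0 ≤ r := by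
    rintro _ ⟨y, hy, rfl⟩
    exact div_nonneg_of_nonpos (h y hy.le) hy.le
  have hT : T.Nonempty := ⟨_, y₀, hy₀, rfl⟩
  refine ⟨sInf T, le_csInf hT hT_nonneg, fun x => ?_⟩
  rcases lt_trichotomy (hermForm D x) 0 with hneg | hzero | hpos
  · have hle : sInf T ≤ hermForm A x / hermForm D x := csInf_le ⟨0, hT_nonneg⟩ ⟨x, hneg, rfl⟩
    rwa [le_div_iff_of_neg hneg] at hle
  · rw [hzero, mul_zero]
    exact h x hzero.le
  · suffices hle : hermForm A x / hermForm D x ≤ sInf T by rwa [div_le_iff₀ hpos] at hle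
    refine le_csInf hT ?_
    rintro _ ⟨y, hy, rfl⟩
    dsimp only
    rw [← neg_div_neg_eq (hermForm A y), div_le_div_iff₀ hpos (neg_pos.mpr hy)]
    linarith [neg_hermForm_mul_add_mul_nonpos hA hD h hpos hy]

theorem forall_hermForm_nonpos_imp_iff_exists_posSemidef (hA : A.IsHermitian)
    (hD : D.IsHermitian) {y₀ : m → ℂ} (hy₀ : hermForm D y₀ < 0) :
    (∀ z, hermForm D z ≤ 0 → hermForm A z ≤ 0) ↔
      ∃ q : ℝ, 0 ≤ q ∧ ((q : ℂ) • D - A).PosSemidef := by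
  have hsub (q : ℝ) : ((q : ℂ) • D - A).IsHermitian :=
    (hD.smul (Complex.conj_ofReal q)).sub hA
  simp_rw [posSemidef_iff_hermForm_nonneg (hsub _), sub_hermForm, ofReal_smul_hermForm,
    sub_nonneg]
  refine ⟨fun h => exists_nonneg_hermForm_le_smul hA hD h hy₀, ?_⟩
  rintro ⟨q, hq, hle⟩ z hz
  exact (hle z).trans (mul_nonpos_of_nonneg_of_nonpos hq hz)

end SLemma

lemma forall_hermForm_nonpos_imp_iff_of_inr_eq_one {A D : Matrix (m ⊕ Unit) (m ⊕ Unit) ℂ}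
    (h₀ : ∀ z, z (Sum.inr ()) = 0 → hermForm D z ≤ 0 → hermForm A z ≤ 0) :
    (∀ z, hermForm D z ≤ 0 → hermForm A z ≤ 0) ↔
      ∀ δ : m → ℂ, hermForm D (Sum.elim δ 1) ≤ 0 → hermForm A (Sum.elim δ 1) ≤ 0 := by
  refine ⟨fun h δ => h _, fun h z hz => ?_⟩
  set t := z (Sum.inr ())
  by_cases ht : t = 0
  · exact h₀ z ht hz
  have hzt : z = t • Sum.elim (t⁻¹ • (z ∘ Sum.inl)) 1 := by
    ext (i | _) <;> simp [t, ht]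
  rw [hzt, hermForm_smul] at hz ⊢
  exact mul_nonpos_of_nonneg_of_nonpos (by positivity)
    (h _ (nonpos_of_mul_nonpos_right hz (by positivity)))

lemma hermForm_fromBlocks_zero_zero (P : Matrix m m ℂ) (R : Matrix k k ℂ) (x : m ⊕ k → ℂ) :
    hermForm (fromBlocks P 0 0 R) x = hermForm P (x ∘ Sum.inl) + hermForm R (x ∘ Sum.inr) := by
  nth_rewrite 1 [hermForm, ← Sum.elim_comp_inl_inr x]
  simp only [fromBlocks_mulVec, zero_mulVec, add_zero, zero_add, Function.star_sumElim,
    sumElim_dotProduct_sumElim, Complex.add_re, hermForm]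

lemma hermForm_one [DecidableEq m] (v : m → ℂ) : hermForm 1 v = ∑ i, ‖v i‖ ^ 2 := by
  simp only [hermForm, one_mulVec, dotProduct, Pi.star_apply, Complex.star_def, Complex.conj_mul',
    ← Complex.ofReal_pow, ← Complex.ofReal_sum, Complex.ofReal_re]

lemma hermForm_of_const (r : ℝ) (τ : Unit → ℂ) :
    hermForm (of fun _ _ : Unit => (r : ℂ)) τ = r * ‖τ ()‖ ^ 2 := by
  have : star τ ⬝ᵥ (of fun _ _ : Unit => (r : ℂ)) *ᵥ τ = r * star (τ ()) * τ () := by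
    simp [dotProduct, mulVec, mul_left_comm, mul_assoc]
  rw [hermForm, this, mul_assoc, Complex.star_def, Complex.conj_mul', ← Complex.ofReal_pow,
    ← Complex.ofReal_mul, Complex.ofReal_re]

lemma hermForm_conjTranspose_mul_mul (M : Matrix k k ℂ) (B : Matrix k m ℂ) (x : m → ℂ) :
    hermForm (Bᴴ * M * B) x = hermForm M (B *ᵥ x) := by
  rw [hermForm, hermForm, star_mulVec, ← dotProduct_mulVec, mulVec_mulVec, mulVec_mulVec]

end Matrix

namespace RobustQuadraticConstraint

variable {m : Type*} [DecidableEq m]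

noncomputable def ballForm (ε : ℝ) : Matrix (m ⊕ Unit) (m ⊕ Unit) ℂ :=
  fromBlocks 1 0 0 (of fun _ _ => ((-ε ^ 2 : ℝ) : ℂ))

lemma isHermitian_ballForm (ε : ℝ) :
    (ballForm ε : Matrix (m ⊕ Unit) (m ⊕ Unit) ℂ).IsHermitian := by
  refine isHermitian_fromBlocks_iff.mpr ⟨isHermitian_one, by simp, by simp, ?_⟩
  ext
  simp [conjTranspose_apply]

variable [Fintype m]

lemma hermForm_ballForm (ε : ℝ) (x : m ⊕ Unit → ℂ) :
    hermForm (ballForm ε) x = ∑ i, ‖x (Sum.inl i)‖ ^ 2 - ε ^ 2 * ‖x (Sum.inr ())‖ ^ 2 := by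
  rw [ballForm, hermForm_fromBlocks_zero_zero, hermForm_one, hermForm_of_const]
  simp only [Function.comp_apply]
  ring

noncomputable def constraintForm (M : Matrix m m ℂ) (g : m → ℂ) (c : ℝ) :
    Matrix (m ⊕ Unit) (m ⊕ Unit) ℂ :=
  (fromCols 1 (of fun i _ => g i))ᴴ * M * fromCols 1 (of fun i _ => g i) +
    fromBlocks 0 0 0 (of fun _ _ => (c : ℂ))

lemma isHermitian_constraintForm {M : Matrix m m ℂ} (hM : M.IsHermitian) (g : m → ℂ) (c : ℝ) :
    (constraintForm M g c).IsHermitian := by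
  refine (isHermitian_conjTranspose_mul_mul _ hM).add
    (isHermitian_fromBlocks_iff.mpr ⟨isHermitian_zero, by simp, by simp, ?_⟩)
  ext
  simp [conjTranspose_apply]

lemma hermForm_constraintForm (M : Matrix m m ℂ) (g : m → ℂ) (c : ℝ) (x : m ⊕ Unit → ℂ) :
    hermForm (constraintForm M g c) x =
      hermForm M (x ∘ Sum.inl + x (Sum.inr ()) • g) + c * ‖x (Sum.inr ())‖ ^ 2 := by
  have hG :
      fromCols 1 (of fun i (_ : Unit) => g i) *ᵥ x = x ∘ Sum.inl + x (Sum.inr ()) • g := by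
    rw [fromCols_mulVec, one_mulVec]
    ext i
    simp [mulVec, dotProduct, mul_comm]
  rw [constraintForm, add_hermForm, hermForm_conjTranspose_mul_mul, hG,
    hermForm_fromBlocks_zero_zero, hermForm_of_const]
  simp [hermForm]

lemma hermForm_constraintForm_sumElim_one {M : Matrix m m ℂ} (hM : M.IsHermitian) (g : m → ℂ)
    (c : ℝ) (δ : m → ℂ) :
    hermForm (constraintForm M g c) (Sum.elim δ 1) =
      hermForm M δ + 2 * (star g ⬝ᵥ M *ᵥ δ).re + hermForm M g + c := by
  rw [hermForm_constraintForm, Sum.elim_comp_inl, Sum.elim_inr, Pi.one_apply, one_smul,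
    add_comm δ, hM.hermForm_add]
  simp only [norm_one, one_pow, mul_one]
  ring

lemma hermForm_constraintForm_nonpos_of_inr_eq_zero (M : Matrix m m ℂ) (g : m → ℂ) (c ε : ℝ)
    (z : m ⊕ Unit → ℂ) (hz : z (Sum.inr ()) = 0) (hball : hermForm (ballForm ε) z ≤ 0) :
    hermForm (constraintForm M g c) z ≤ 0 := by
  rw [hermForm_ballForm, hz, norm_zero, zero_pow two_ne_zero, mul_zero, sub_zero] at hball
  have hinl : z ∘ Sum.inl = 0 := by
    ext i
    have hsum := (Finset.sum_eq_zero_iff_of_nonneg fun i _ => by positivity).1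
      (le_antisymm hball (by positivity)) i (Finset.mem_univ i)
    simpa using hsum
  rw [hermForm_constraintForm, hinl, hz]
  simp [hermForm]

lemma fromBlocks_sub_eq_smul_ballForm_sub_constraintForm (M : Matrix m m ℂ) (g : m → ℂ)
    (q c ε : ℝ) :
    fromBlocks ((q : ℂ) • (1 : Matrix m m ℂ)) 0 0
          (of fun (_ _ : Unit) => ((-(q * ε ^ 2) - c : ℝ) : ℂ)) -
        (fromCols (1 : Matrix m m ℂ) (of fun i (_ : Unit) => g i))ᴴ * M *
          fromCols (1 : Matrix m m ℂ) (of fun i (_ : Unit) => g i) =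
      (q : ℂ) • ballForm ε - constraintForm M g c := by
  have hblocks : fromBlocks ((q : ℂ) • (1 : Matrix m m ℂ)) 0 0
      (of fun (_ _ : Unit) => ((-(q * ε ^ 2) - c : ℝ) : ℂ)) =
        (q : ℂ) • ballForm ε - fromBlocks 0 0 0 (of fun _ _ => (c : ℂ)) := by
    ext (i | i) (j | j) <;> simp [ballForm]
  rw [hblocks, constraintForm]
  abel

end RobustQuadraticConstraint

open RobustQuadraticConstraint

/-- Robust quadratic constraint as an LMI: for Hermitian `M`, `g ∈ ℂⁿ`, `c ∈ ℝ`, `ε > 0`,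
`δᴴ M δ + 2 Re(gᴴ M δ) + gᴴ M g + c ≤ 0` holds for all `‖δ‖₂ ≤ ε` iff there exists
`q ≥ 0` such that `P - Gᴴ M G ⪰ 0`, where `P = blkdiag(q Iₙ, -qε² - c)` and `G = [Iₙ, g]`. -/
theorem robust_quadratic_constraint_iff_LMI
    {n : ℕ} (M : Matrix (Fin n) (Fin n) ℂ) (hM : M.IsHermitian)
    (g : Fin n → ℂ) (c ε : ℝ) (hε : 0 < ε) :
    (∀ δ : Fin n → ℂ, Real.sqrt (∑ i, ‖δ i‖ ^ 2) ≤ ε →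
        (star δ ⬝ᵥ M.mulVec δ).re + 2 * (star g ⬝ᵥ M.mulVec δ).re +
            (star g ⬝ᵥ M.mulVec g).re + c ≤ 0) ↔
      ∃ q : ℝ, 0 ≤ q ∧
        (Matrix.fromBlocks ((q : ℂ) • (1 : Matrix (Fin n) (Fin n) ℂ)) 0 0
              (Matrix.of fun (_ _ : Unit) => ((-(q * ε ^ 2) - c : ℝ) : ℂ)) -
          (Matrix.fromCols (1 : Matrix (Fin n) (Fin n) ℂ)
                (Matrix.of fun i (_ : Unit) => g i))ᴴ * M *
            Matrix.fromCols (1 : Matrix (Fin n) (Fin n) ℂ)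
              (Matrix.of fun i (_ : Unit) => g i)).PosSemidef := by
  have hy₀ : hermForm (ballForm ε) (Sum.elim (0 : Fin n → ℂ) 1) < 0 := by
    simpa [hermForm_ballForm] using pow_pos hε 2
  simp_rw [fromBlocks_sub_eq_smul_ballForm_sub_constraintForm]
  rw [← forall_hermForm_nonpos_imp_iff_exists_posSemidef (isHermitian_constraintForm hM g c)
      (isHermitian_ballForm ε) hy₀,
    forall_hermForm_nonpos_imp_iff_of_inr_eq_one
      (hermForm_constraintForm_nonpos_of_inr_eq_zero M g c ε)]
  refine forall_congr' fun δ => imp_congr ?_ ?_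
  · simp [hermForm_ballForm, Real.sqrt_le_left hε.le]
  · rw [hermForm_constraintForm_sumElim_one hM]
    rfl
end

section
/- (Validity of the inner approximation of the QoS constraint.) Let W̃ and W̃⁰ be n×n complex Hermitian matrices, let V and V⁰ be m×m complex Hermitian matrices, let H be an n×m complex matrix, and let c ∈ ℝ. If (1/2)‖W̃ + H V H^H‖_F² − Re Tr(H^H H V⁰ H^H H V) − Re Tr(W̃⁰ W̃) + c + (1/2)‖H V⁰ H^H‖_F² + (1/2)‖W̃⁰‖_F² ≤ 0, then c + Re Tr(V H^H W̃ H) ≤ 0. That is, the first-order convexified constraint implies the original difference-of-convex constraint. -/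
open Matrix

/-!
Write `B = H V Hᴴ` and `B₀ = H V₀ Hᴴ`. Expanding `‖W + B‖²` and completing the squares
`‖W₀ - W‖²` and `‖B₀ - B‖²` (by Hermitian symmetry and cyclicity of the trace) turns the
left-hand side of the hypothesis into `c + Re Tr(V Hᴴ W H) + ½‖W₀ - W‖² + ½‖B₀ - B‖²`.
-/

/-- The Frobenius norm of a complex matrix. -/
noncomputable def frobNorm {α β : Type*} [Fintype α] [Fintype β]
    (X : Matrix α β ℂ) : ℝ :=
  Real.sqrt (∑ i, ∑ j, ‖X i j‖ ^ 2)

section Frobenius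

variable {α β : Type*} [Fintype α] [Fintype β]

lemma frobNorm_sq_eq_re_trace (X : Matrix α β ℂ) :
    frobNorm X ^ 2 = ((Xᴴ * X).trace).re := by
  have hdiag : ∀ j, (Xᴴ * X).diag j = ∑ i, ((‖X i j‖ ^ 2 : ℝ) : ℂ) := fun j => by
    rw [diag_apply, mul_apply]
    refine Finset.sum_congr rfl fun i _ => ?_
    rw [conjTranspose_apply, mul_comm]
    simp only [RCLike.star_def, Complex.mul_conj, Complex.normSq_eq_norm_sq, Complex.ofReal_pow]
  rw [frobNorm, Real.sq_sqrt (by positivity), trace, Finset.sum_comm]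
  simp only [hdiag, Complex.re_sum, Complex.ofReal_re]

lemma re_trace_conjTranspose_mul_comm (A B : Matrix α β ℂ) :
    ((Bᴴ * A).trace).re = ((Aᴴ * B).trace).re := by
  rw [← conjTranspose_conjTranspose A, ← conjTranspose_mul, trace_conjTranspose,
    conjTranspose_conjTranspose, Complex.star_def, Complex.conj_re]

lemma frobNorm_add_sq (A B : Matrix α β ℂ) :
    frobNorm (A + B) ^ 2 = frobNorm A ^ 2 + frobNorm B ^ 2 + 2 * ((Aᴴ * B).trace).re := by
  simp only [frobNorm_sq_eq_re_trace, conjTranspose_add, Matrix.add_mul, Matrix.mul_add, trace_add,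
    Complex.add_re, re_trace_conjTranspose_mul_comm A B]
  ring

lemma frobNorm_sub_sq (A B : Matrix α β ℂ) :
    frobNorm (A - B) ^ 2 = frobNorm A ^ 2 + frobNorm B ^ 2 - 2 * ((Aᴴ * B).trace).re := by
  simp only [frobNorm_sq_eq_re_trace, conjTranspose_sub, Matrix.sub_mul, Matrix.mul_sub, trace_sub,
    Complex.sub_re, re_trace_conjTranspose_mul_comm A B]
  ring

end Frobenius

theorem inner_approximation_implies_qos_general
    {n m : ℕ} (W W₀ : Matrix (Fin n) (Fin n) ℂ)
    (hW : W.IsHermitian) (hW₀ : W₀.IsHermitian)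
    (V V₀ : Matrix (Fin m) (Fin m) ℂ)
    (hV₀ : V₀.IsHermitian)
    (H : Matrix (Fin n) (Fin m) ℂ) (c : ℝ)
    (h : (1 / 2) * frobNorm (W + H * V * Hᴴ) ^ 2 -
          ((Hᴴ * H * V₀ * Hᴴ * H * V).trace).re - ((W₀ * W).trace).re + c +
          (1 / 2) * frobNorm (H * V₀ * Hᴴ) ^ 2 + (1 / 2) * frobNorm W₀ ^ 2 ≤ 0) :
    c + ((V * Hᴴ * W * H).trace).re ≤ 0 := by
  have hexpand := frobNorm_add_sq W (H * V * Hᴴ)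
  have hW_sq := frobNorm_sub_sq W₀ W
  have hB_sq := frobNorm_sub_sq (H * V₀ * Hᴴ) (H * V * Hᴴ)
  rw [hW.eq] at hexpand
  rw [hW₀.eq] at hW_sq
  rw [(isHermitian_mul_mul_conjTranspose H hV₀).eq] at hB_sq
  have hcross : (W * (H * V * Hᴴ)).trace = (V * Hᴴ * W * H).trace := by
    simpa only [Matrix.mul_assoc] using trace_mul_comm (W * H) (V * Hᴴ)
  have hcross₀ : (H * V₀ * Hᴴ * (H * V * Hᴴ)).trace = (Hᴴ * H * V₀ * Hᴴ * H * V).trace := by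
    simpa only [Matrix.mul_assoc] using trace_mul_comm (H * V₀ * Hᴴ * H * V) Hᴴ
  rw [hcross] at hexpand
  rw [hcross₀] at hB_sq
  linarith [sq_nonneg (frobNorm (W₀ - W)), sq_nonneg (frobNorm (H * V₀ * Hᴴ - H * V * Hᴴ))]

/-- Validity of the inner approximation of the QoS constraint: the first-order
convexified constraint implies the original difference-of-convex constraint
`c + Re Tr(V Hᴴ W̃ H) ≤ 0`. -/
theorem inner_approximation_implies_qos
    {n m : ℕ} (W W₀ : Matrix (Fin n) (Fin n) ℂ)
    (hW : W.IsHermitian) (hW₀ : W₀.IsHermitian)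
    (V V₀ : Matrix (Fin m) (Fin m) ℂ)
    (hV : V.IsHermitian) (hV₀ : V₀.IsHermitian)
    (H : Matrix (Fin n) (Fin m) ℂ) (c : ℝ)
    (h : (1 / 2) * frobNorm (W + H * V * Hᴴ) ^ 2 -
          ((Hᴴ * H * V₀ * Hᴴ * H * V).trace).re - ((W₀ * W).trace).re + c +
          (1 / 2) * frobNorm (H * V₀ * Hᴴ) ^ 2 + (1 / 2) * frobNorm W₀ ^ 2 ≤ 0) :
    c + ((V * Hᴴ * W * H).trace).re ≤ 0 :=
  inner_approximation_implies_qos_general W W₀ hW hW₀ V V₀ hV₀ H c h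
end

section
/- (Validity of the linearized rank-one constraint.) Let V and V⁰ be m×m complex positive semidefinite Hermitian matrices, and let u ∈ ℂ^m be a unit-norm eigenvector of V⁰ associated with its largest eigenvalue λmax(V⁰). If Tr(V) − λmax(V⁰) − Re(u^H (V − V⁰) u) ≤ 0, then rank(V) ≤ 1. -/
/-! In an eigenbasis of `V`, with eigenvalues `μᵢ ≥ 0` and `wᵢ` the coordinates of the unit
vector `u`, the hypothesis reads `∑ μᵢ ≤ ∑ μᵢ |wᵢ|²`, because `uᴴ V₀ u = λmax(V₀)` cancels.
Since `∑ |wᵢ|² = 1`, every term `μᵢ (1 - |wᵢ|²)` is nonnegative, hence zero: each nonzero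
eigenvalue carries `|wᵢ| = 1`, and two of them would give `∑ |wᵢ|² ≥ 2`. -/

open ComplexOrder Matrix WithLp
open scoped InnerProductSpace

lemma Fintype.card_ne_zero_le_one_of_sum_le_sum_mul {ι : Type*} [Fintype ι] {μ p : ι → ℝ}
    (hμ : 0 ≤ μ) (hp : 0 ≤ p) (hp_sum : ∑ i, p i = 1) (h : ∑ i, μ i ≤ ∑ i, μ i * p i) :
    Fintype.card {i // μ i ≠ 0} ≤ 1 := by
  classical
  have hp_le : ∀ i, p i ≤ 1 := fun i =>
    hp_sum ▸ Finset.single_le_sum (fun j _ => hp j) (Finset.mem_univ i)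
  have hterm : ∀ i, 0 ≤ μ i * (1 - p i) := fun i => mul_nonneg (hμ i) (by linarith [hp_le i])
  have hp_one : ∀ i, μ i ≠ 0 → p i = 1 := by
    have hsum : ∑ i, μ i * (1 - p i) = 0 := by
      refine le_antisymm ?_ (Finset.sum_nonneg fun i _ => hterm i)
      simp only [mul_sub, mul_one, Finset.sum_sub_distrib]
      linarith
    intro i hi
    have := (Finset.sum_eq_zero_iff_of_nonneg fun i _ => hterm i).mp hsum i (Finset.mem_univ i)
    linarith [(mul_eq_zero.mp this).resolve_left hi]
  rw [Fintype.card_le_one_iff]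
  rintro ⟨i, hi⟩ ⟨j, hj⟩
  by_contra hne
  have hij : i ≠ j := fun hij => hne (Subtype.ext hij)
  have := Finset.sum_le_sum_of_subset_of_nonneg (Finset.subset_univ {i, j}) fun k _ _ => hp k
  rw [Finset.sum_pair hij, hp_one i hi, hp_one j hj, hp_sum] at this
  norm_num at this

namespace Matrix

variable {𝕜 n : Type*} [RCLike 𝕜] [Fintype n] [DecidableEq n] {A : Matrix n n 𝕜}

lemma IsHermitian.star_dotProduct_mulVec_eq_sum (hA : A.IsHermitian) (x : EuclideanSpace 𝕜 n) :
    star (ofLp x) ⬝ᵥ A *ᵥ ofLp x =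
      ((∑ i, hA.eigenvalues i * ‖⟪hA.eigenvectorBasis i, x⟫_𝕜‖ ^ 2 : ℝ) : 𝕜) := by
  set b := hA.eigenvectorBasis
  have hAx : A *ᵥ ofLp x = ∑ i, (⟪b i, x⟫_𝕜 * hA.eigenvalues i) • ofLp (b i) := by
    conv_lhs => rw [← b.sum_repr' x]
    simp only [ofLp_sum, ofLp_smul, mulVec_sum, mulVec_smul, b, hA.mulVec_eigenvectorBasis,
      RCLike.real_smul_eq_coe_smul (K := 𝕜), mul_smul]
  rw [hAx, dotProduct_sum, RCLike.ofReal_sum]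
  refine Finset.sum_congr rfl fun i _ => ?_
  rw [dotProduct_smul, dotProduct_comm, ← EuclideanSpace.inner_eq_star_dotProduct, smul_eq_mul,
    ← inner_conj_symm x, RCLike.ofReal_mul, RCLike.ofReal_pow, ← RCLike.mul_conj]
  ring

theorem PosSemidef.rank_le_one_of_re_trace_le {x : EuclideanSpace 𝕜 n} (hA : A.PosSemidef)
    (hx : ‖x‖ = 1) (h : RCLike.re A.trace ≤ RCLike.re (star (ofLp x) ⬝ᵥ A *ᵥ ofLp x)) :
    A.rank ≤ 1 := by
  rw [hA.1.star_dotProduct_mulVec_eq_sum, RCLike.ofReal_re, hA.1.trace_eq_sum_eigenvalues,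
    map_sum] at h
  simp only [RCLike.ofReal_re] at h
  rw [hA.1.rank_eq_card_non_zero_eigs]
  exact Fintype.card_ne_zero_le_one_of_sum_le_sum_mul (fun i => hA.eigenvalues_nonneg i)
    (fun i => sq_nonneg _) (by rw [OrthonormalBasis.sum_sq_norm_inner_right, hx, one_pow]) h

end Matrix

/-- Validity of the linearized rank-one constraint: for PSD matrices `V`, `V₀` and a
unit-norm eigenvector `u` of `V₀` for its largest eigenvalue, if
`Tr V - λmax V₀ - Re(uᴴ (V - V₀) u) ≤ 0` then `rank V ≤ 1`. -/
theorem rank_le_one_of_linearized_constraint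
    {m : ℕ} (hm : 0 < m) (V V₀ : Matrix (Fin m) (Fin m) ℂ)
    (hV : V.PosSemidef) (hV₀ : V₀.PosSemidef) (u : Fin m → ℂ)
    (hu_eig : V₀.mulVec u =
      ((Finset.univ.sup' ⟨⟨0, hm⟩, Finset.mem_univ _⟩ hV₀.1.eigenvalues : ℝ) : ℂ) • u)
    (hu_norm : Real.sqrt (∑ i, ‖u i‖ ^ 2) = 1)
    (h : (V.trace).re -
          Finset.univ.sup' ⟨⟨0, hm⟩, Finset.mem_univ _⟩ hV₀.1.eigenvalues -
          (star u ⬝ᵥ (V - V₀).mulVec u).re ≤ 0) :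
    V.rank ≤ 1 := by
  set lam := Finset.univ.sup' ⟨⟨0, hm⟩, Finset.mem_univ _⟩ hV₀.1.eigenvalues
  have hx : ‖toLp 2 u‖ = 1 := by rwa [EuclideanSpace.norm_eq]
  have hu_unit : star u ⬝ᵥ u = 1 := by
    rw [dotProduct_comm, ← EuclideanSpace.inner_toLp_toLp, inner_self_eq_norm_sq_to_K, hx]
    simp
  have hV₀_form : star u ⬝ᵥ V₀ *ᵥ u = lam := by
    rw [hu_eig, dotProduct_smul, hu_unit, smul_eq_mul, mul_one]
  rw [sub_mulVec, dotProduct_sub, hV₀_form, Complex.sub_re, Complex.ofReal_re] at h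
  exact hV.rank_le_one_of_re_trace_le hx (by simpa using h)
end
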